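/- The wrinkling-move structure matrix P (with P₁₂ = sy + 2ty + 2xz, P₁₃ = 2xy − (s+2t)z, P₁₄ = −2(y²+z²), P₂₃ = st + 2(t²+x²), P₂₄ = 2tz − 2xy, P₃₄ = 2(ty+xz), skew-symmetric) satisfies the Jacobi identity: for all i,j,k ∈ {1,2,3,4}, Σ_{l=1}^{4} (P^{lk} ∂_l P^{ij} + P^{li} ∂_l P^{jk} + P^{lj} ∂_l P^{ki}) = 0 identically on ℝ⁴. -/

import Mathlib

open Matrix

/-- Partial derivative in the `l`-th coordinate direction on `ℝ⁴`. -/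
noncomputable def pd (l : Fin 4) (g : (Fin 4 → ℝ) → ℝ) (p : Fin 4 → ℝ) : ℝ :=
  fderiv ℝ g p (Pi.single l 1)

/-- The wrinkling-move structure matrix as a matrix-valued function of
`p = (x,y,z,t) = (x₁,x₂,x₃,x₄)`, for a fixed parameter `s`. -/
noncomputable def wrinkleBivector (s : ℝ) (p : Fin 4 → ℝ) : Matrix (Fin 4) (Fin 4) ℝ :=
  !![0, s * p 1 + 2 * p 3 * p 1 + 2 * p 0 * p 2,
       2 * p 0 * p 1 - (s + 2 * p 3) * p 2, -(2 * ((p 1) ^ 2 + (p 2) ^ 2));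
     -(s * p 1 + 2 * p 3 * p 1 + 2 * p 0 * p 2), 0,
       s * p 3 + 2 * ((p 3) ^ 2 + (p 0) ^ 2), 2 * p 3 * p 2 - 2 * p 0 * p 1;
     -(2 * p 0 * p 1 - (s + 2 * p 3) * p 2), -(s * p 3 + 2 * ((p 3) ^ 2 + (p 0) ^ 2)),
       0, 2 * (p 3 * p 1 + p 0 * p 2);
     2 * ((p 1) ^ 2 + (p 2) ^ 2), -(2 * p 3 * p 2 - 2 * p 0 * p 1),
       -(2 * (p 3 * p 1 + p 0 * p 2)), 0]

/-!
The Jacobiator of a skew-symmetric bivector field is alternating in its three indices, so it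
vanishes as soon as it vanishes on the four strictly increasing triples of `Fin 4`. For those, the
entries of `wrinkleBivector` are quadratic polynomials whose partial derivatives are read off
directly, and the Jacobi identity becomes a polynomial identity in `s, x, y, z, t`.
-/

section PartialDerivative

variable (l : Fin 4) (p : Fin 4 → ℝ)

lemma pd_const (c : ℝ) : pd l (fun _ => c) p = 0 := by
  simp [pd]

lemma pd_coord (m : Fin 4) : pd l (fun q => q m) p = if m = l then 1 else 0 := by
  rw [pd, fderiv_apply differentiableAt_id m]
  simp [Pi.single_apply]

variable {f g : (Fin 4 → ℝ) → ℝ}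

lemma pd_neg : pd l (fun q => -f q) p = -pd l f p := by
  simp [pd, fderiv_fun_neg]

lemma pd_add (hf : DifferentiableAt ℝ f p) (hg : DifferentiableAt ℝ g p) :
    pd l (fun q => f q + g q) p = pd l f p + pd l g p := by
  simp [pd, fderiv_fun_add hf hg]

lemma pd_sub (hf : DifferentiableAt ℝ f p) (hg : DifferentiableAt ℝ g p) :
    pd l (fun q => f q - g q) p = pd l f p - pd l g p := by
  simp [pd, fderiv_fun_sub hf hg]

lemma pd_mul (hf : DifferentiableAt ℝ f p) (hg : DifferentiableAt ℝ g p) :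
    pd l (fun q => f q * g q) p = pd l f p * g p + f p * pd l g p := by
  simp [pd, fderiv_fun_mul hf hg]
  ring

lemma pd_pow (n : ℕ) (hf : DifferentiableAt ℝ f p) :
    pd l (fun q => f q ^ n) p = n * f p ^ (n - 1) * pd l f p := by
  simp [pd, fderiv_fun_pow n hf]

end PartialDerivative

section Jacobiator

noncomputable def jacobiator (P : (Fin 4 → ℝ) → Matrix (Fin 4) (Fin 4) ℝ) (i j k : Fin 4)
    (p : Fin 4 → ℝ) : ℝ :=
  ∑ l : Fin 4,
    (P p l k * pd l (fun q => P q i j) p + P p l i * pd l (fun q => P q j k) p +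
     P p l j * pd l (fun q => P q k i) p)

variable {P : (Fin 4 → ℝ) → Matrix (Fin 4) (Fin 4) ℝ} (i j k : Fin 4) (p : Fin 4 → ℝ)

lemma jacobiator_cycle : jacobiator P j k i p = jacobiator P i j k p :=
  Finset.sum_congr rfl fun _ _ => by ring

lemma jacobiator_swap (hP : ∀ q i j, P q j i = -P q i j) :
    jacobiator P j i k p = -jacobiator P i j k p := by
  simp only [jacobiator, hP _ j i, hP _ i k, hP _ k j, pd_neg, ← Finset.sum_neg_distrib]
  exact Finset.sum_congr rfl fun _ _ => by ring

end Jacobiator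

theorem eq_zero_of_alternating {ι : Type*} [LinearOrder ι] {J : ι → ι → ι → ℝ}
    (hcycle : ∀ i j k, J j k i = J i j k) (hswap : ∀ i j k, J j i k = -J i j k)
    (hlt : ∀ i j k, i < j → j < k → J i j k = 0) (i j k : ι) : J i j k = 0 := by
  have hdiag : ∀ i k, J i i k = 0 := fun i k => by linarith [hswap i i k]
  have hfirst : ∀ i j k, i < j → J i j k = 0 := by
    intro i j k hij
    rcases lt_trichotomy k i with hki | rfl | hik
    · rw [hcycle]; exact hlt k i j hki hij
    · rw [hcycle]; exact hdiag k j
    · rcases lt_trichotomy k j with hkj | rfl | hjk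
      · linarith [hcycle i j k, hcycle i k j, hswap k j i, hlt i k j hik hkj]
      · rw [← hcycle]; exact hdiag k i
      · exact hlt i j k hij hjk
  rcases lt_trichotomy i j with hij | rfl | hji
  · exact hfirst i j k hij
  · exact hdiag i k
  · linarith [hswap j i k, hfirst j i k hji]

lemma wrinkleBivector_apply_swap (s : ℝ) (q : Fin 4 → ℝ) (i j : Fin 4) :
    wrinkleBivector s q j i = -wrinkleBivector s q i j := by
  fin_cases i <;> fin_cases j <;> simp [wrinkleBivector]

lemma jacobiator_wrinkleBivector_of_lt (s : ℝ) {i j k : Fin 4} (hij : i < j) (hjk : j < k)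
    (p : Fin 4 → ℝ) : jacobiator (wrinkleBivector s) i j k p = 0 := by
  fin_cases i <;> fin_cases j <;> fin_cases k <;>
    simp only [Fin.reduceFinMk, Fin.reduceLT] at hij hjk ⊢ <;>
  · simp only [jacobiator, wrinkleBivector, Fin.sum_univ_four, Fin.isValue,
      Matrix.of_apply, Matrix.cons_val', Matrix.cons_val_zero, Matrix.cons_val_one,
      Matrix.cons_val_two, Matrix.cons_val_three, Matrix.empty_val', Matrix.cons_val_fin_one,
      Matrix.head_cons, Matrix.tail_cons, Matrix.head_fin_const]
    simp (disch := fun_prop) only [pd_neg, pd_add, pd_sub, pd_mul, pd_pow, pd_const, pd_coord,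
      Fin.reduceEq, ↓reduceIte]
    ring

/-- The wrinkling-move structure matrix satisfies the Jacobi identity:
for all `i,j,k`, `Σ_l (P^{lk} ∂_l P^{ij} + P^{li} ∂_l P^{jk} + P^{lj} ∂_l P^{ki}) = 0`
identically on `ℝ⁴`. -/
theorem wrinkle_jacobi (s : ℝ) :
    ∀ (i j k : Fin 4) (p : Fin 4 → ℝ),
      ∑ l : Fin 4,
        (wrinkleBivector s p l k * pd l (fun q => wrinkleBivector s q i j) p +
         wrinkleBivector s p l i * pd l (fun q => wrinkleBivector s q j k) p +
         wrinkleBivector s p l j * pd l (fun q => wrinkleBivector s q k i) p) = 0 := by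
  intro i j k p
  exact eq_zero_of_alternating (J := fun i j k => jacobiator (wrinkleBivector s) i j k p)
    (fun i j k => jacobiator_cycle i j k p)
    (fun i j k => jacobiator_swap i j k p (wrinkleBivector_apply_swap s))
    (fun _ _ _ hij hjk => jacobiator_wrinkleBivector_of_lt s hij hjk p) i j k
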